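/- If a constant cubic form A^{αβγ} on ℝ^4 satisfies the null condition A^{αβγ} ξ_α ξ_β ξ_γ = 0 for every Minkowski-null covector ξ (ξ_0² = Σ_a ξ_a²), with |A^{αβγ}| ≤ K, then on Λ' = {|x| ≤ t − 1} the one-frame component A̲^{000} := A^{αβγ} Ψ_α^0 Ψ_β^0 Ψ_γ^0 = A^{αβγ} with each index 0 replaced via Ψ^0_0 = 1, Ψ^0_a = −x^a/t, satisfies |A̲^{000}| ≤ C K (t² − |x|²)/t² for a universal constant C. -/

import Mathlib

/-!
Let `r = |x|`. When `r > 0` the covector `ω = (1, -x/r)` is null, so the cubic form vanishes at `ω`,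
and `ψ = (1, -x/t)` differs from `ω` by at most `(t - r)/t` in every component. Since the cubic form
is Lipschitz on the unit ball, `|A̲⁰⁰⁰| ≲ K (t - r)/t ≤ K (t² - r²)/t²`. When `r = 0` the same
argument runs with `ω = 0`.
-/

open Finset

/-- The one-frame covector `ψ`: `ψ_0 = 1`, `ψ_a = −x^a/t`. -/
noncomputable def psiVec (t : ℝ) (x : Fin 3 → ℝ) : Fin 4 → ℝ :=
  fun γ => if h : γ = 0 then 1 else -(x (γ.pred h)) / t

section CubicForm

variable {ι : Type*} [Fintype ι]

def cubicForm (A : ι → ι → ι → ℝ) (ξ : ι → ℝ) : ℝ :=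
  ∑ α, ∑ β, ∑ γ, A α β γ * ξ α * ξ β * ξ γ

lemma abs_mul_mul_sub_mul_mul_le {a b c a' b' c' : ℝ} (hb : |b| ≤ 1) (hc : |c| ≤ 1)
    (ha' : |a'| ≤ 1) (hb' : |b'| ≤ 1) :
    |a * b * c - a' * b' * c'| ≤ |a - a'| + |b - b'| + |c - c'| := by
  have htel : a * b * c - a' * b' * c' =
      (a - a') * (b * c) + (b - b') * (a' * c) + (c - c') * (a' * b') := by
    ring
  rw [htel]
  refine (abs_add_three _ _ _).trans (add_le_add_three ?_ ?_ ?_) <;>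
    refine (abs_mul _ _).trans_le (mul_le_of_le_one_right (abs_nonneg _) ?_) <;>
    rw [abs_mul] <;> exact mul_le_one₀ ‹_› (abs_nonneg _) ‹_›

lemma abs_cubicForm_sub_le {A : ι → ι → ι → ℝ} {K : ℝ} (hA : ∀ α β γ, |A α β γ| ≤ K)
    {ξ η : ι → ℝ} (hξ : ‖ξ‖ ≤ 1) (hη : ‖η‖ ≤ 1) :
    |cubicForm A ξ - cubicForm A η| ≤ 3 * Fintype.card ι ^ 3 * K * ‖ξ - η‖ := by
  have hcoord : ∀ (f : ι → ℝ) i, |f i| ≤ ‖f‖ := fun f i => norm_le_pi_norm f i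
  have hterm : ∀ α β γ, |A α β γ * (ξ α * ξ β * ξ γ - η α * η β * η γ)| ≤ K * (3 * ‖ξ - η‖) := by
    intro α β γ
    rw [abs_mul]
    refine mul_le_mul (hA α β γ) ?_ (abs_nonneg _) ((abs_nonneg _).trans (hA α β γ))
    refine (abs_mul_mul_sub_mul_mul_le ((hcoord ξ β).trans hξ) ((hcoord ξ γ).trans hξ)
      ((hcoord η α).trans hη) ((hcoord η β).trans hη)).trans ?_
    have hdiff := hcoord (ξ - η)
    simp only [Pi.sub_apply] at hdiff
    linarith [hdiff α, hdiff β, hdiff γ]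
  calc |cubicForm A ξ - cubicForm A η|
      = |∑ α, ∑ β, ∑ γ, A α β γ * (ξ α * ξ β * ξ γ - η α * η β * η γ)| := by
        simp only [cubicForm, ← sum_sub_distrib, mul_sub, mul_assoc]
    _ ≤ ∑ α, ∑ β, ∑ γ, |A α β γ * (ξ α * ξ β * ξ γ - η α * η β * η γ)| :=
        (abs_sum_le_sum_abs _ _).trans <| sum_le_sum fun α _ =>
          (abs_sum_le_sum_abs _ _).trans <| sum_le_sum fun β _ => abs_sum_le_sum_abs _ _
    _ ≤ ∑ _α : ι, ∑ _β : ι, ∑ _γ : ι, K * (3 * ‖ξ - η‖) :=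
        sum_le_sum fun α _ => sum_le_sum fun β _ => sum_le_sum fun γ _ => hterm α β γ
    _ = 3 * Fintype.card ι ^ 3 * K * ‖ξ - η‖ := by
        simp only [sum_const, card_univ, nsmul_eq_mul]
        ring

end CubicForm

section Frame

def IsNullCovector (ξ : Fin 4 → ℝ) : Prop :=
  ξ 0 ^ 2 = ∑ a : Fin 3, ξ a.succ ^ 2

noncomputable def frameVec (s : ℝ) (x : Fin 3 → ℝ) : Fin 4 → ℝ :=
  Fin.cons 1 fun a => -x a / s

lemma psiVec_eq_frameVec (t : ℝ) (x : Fin 3 → ℝ) : psiVec t x = frameVec t x := by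
  funext γ
  cases γ using Fin.cases <;> simp [psiVec, frameVec]

lemma abs_le_sqrt_sum_sq (x : Fin 3 → ℝ) (a : Fin 3) : |x a| ≤ √(∑ b, x b ^ 2) :=
  Real.abs_le_sqrt <| single_le_sum (fun b _ => sq_nonneg (x b)) (mem_univ a)

lemma norm_frameVec_le_one {s : ℝ} {x : Fin 3 → ℝ} (hs : √(∑ a, x a ^ 2) ≤ s) :
    ‖frameVec s x‖ ≤ 1 := by
  refine (pi_norm_le_iff_of_nonneg zero_le_one).2 fun γ => ?_
  cases γ using Fin.cases with
  | zero => simp [frameVec]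
  | succ a =>
    simp only [frameVec, Fin.cons_succ, Real.norm_eq_abs, abs_div, abs_neg]
    exact div_le_one_of_le₀ ((abs_le_sqrt_sum_sq x a).trans (hs.trans (le_abs_self s)))
      (abs_nonneg s)

lemma isNullCovector_frameVec_sqrt {x : Fin 3 → ℝ} (hx : √(∑ a, x a ^ 2) ≠ 0) :
    IsNullCovector (frameVec √(∑ a, x a ^ 2) x) := by
  have hQ : 0 ≤ ∑ a, x a ^ 2 := sum_nonneg fun a _ => sq_nonneg (x a)
  simp only [IsNullCovector, frameVec, Fin.cons_zero, Fin.cons_succ, div_pow, neg_sq, ← sum_div,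
    Real.sq_sqrt hQ]
  rw [one_pow, div_self (by rwa [Ne, Real.sqrt_eq_zero hQ] at hx)]

lemma norm_frameVec_sub_frameVec_sqrt_le {t : ℝ} {x : Fin 3 → ℝ} (ht : √(∑ a, x a ^ 2) ≤ t)
    (hx : 0 < √(∑ a, x a ^ 2)) :
    ‖frameVec t x - frameVec √(∑ a, x a ^ 2) x‖ ≤ (t - √(∑ a, x a ^ 2)) / t := by
  set r := √(∑ a, x a ^ 2)
  have ht0 : 0 < t := hx.trans_le ht
  refine (pi_norm_le_iff_of_nonneg (div_nonneg (sub_nonneg.2 ht) ht0.le)).2 fun γ => ?_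
  cases γ using Fin.cases with
  | zero => simp [frameVec, div_nonneg (sub_nonneg.2 ht) ht0.le]
  | succ a =>
    have hdiff : -x a / t - -x a / r = x a / r * ((t - r) / t) := by
      field_simp
      ring
    simp only [Pi.sub_apply, frameVec, Fin.cons_succ, Real.norm_eq_abs, hdiff, abs_mul,
      abs_div, abs_of_pos hx, abs_of_nonneg (div_nonneg (sub_nonneg.2 ht) ht0.le)]
    exact mul_le_of_le_one_left (by bound) (div_le_one_of_le₀ (abs_le_sqrt_sum_sq x a) hx.le)

lemma exists_null_near_frameVec {t : ℝ} {x : Fin 3 → ℝ} (ht : √(∑ a, x a ^ 2) ≤ t) (ht0 : 0 < t) :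
    ∃ ω, IsNullCovector ω ∧ ‖ω‖ ≤ 1 ∧
      ‖frameVec t x - ω‖ ≤ (t - √(∑ a, x a ^ 2)) / t := by
  rcases (Real.sqrt_nonneg (∑ a, x a ^ 2)).eq_or_lt with hr | hr
  · refine ⟨0, by simp [IsNullCovector], by simp, ?_⟩
    rw [sub_zero, ← hr, sub_zero, div_self ht0.ne']
    exact norm_frameVec_le_one ht
  · exact ⟨_, isNullCovector_frameVec_sqrt hr.ne', norm_frameVec_le_one le_rfl,
      norm_frameVec_sub_frameVec_sqrt_le ht hr⟩

end Frame

lemma sub_div_le_sq_sub_sq_div_sq {r t : ℝ} (hr : 0 ≤ r) (hrt : r ≤ t) (ht : 0 < t) :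
    (t - r) / t ≤ (t ^ 2 - r ^ 2) / t ^ 2 := by
  rw [div_le_div_iff₀ ht (by positivity)]
  nlinarith [mul_nonneg (mul_nonneg hr ht.le) (sub_nonneg.2 hrt)]

/-- A constant cubic form satisfying the Minkowski null condition, with entries
bounded by `K`, has one-frame `(0,0,0)`-component bounded by
`C K (t² − |x|²)/t²` on the cone `Λ' = {|x| ≤ t − 1}`. -/
theorem cubic_null_form_decay :
    ∃ C > (0 : ℝ), ∀ (A : Fin 4 → Fin 4 → Fin 4 → ℝ) (K : ℝ),
      (∀ ξ : Fin 4 → ℝ, (ξ 0) ^ 2 = ∑ a : Fin 3, (ξ a.succ) ^ 2 →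
        ∑ α : Fin 4, ∑ β : Fin 4, ∑ γ : Fin 4, A α β γ * ξ α * ξ β * ξ γ = 0) →
      (∀ α β γ, |A α β γ| ≤ K) →
      ∀ (t : ℝ) (x : Fin 3 → ℝ), Real.sqrt (∑ a : Fin 3, (x a) ^ 2) ≤ t - 1 →
        |∑ α : Fin 4, ∑ β : Fin 4, ∑ γ : Fin 4,
            A α β γ * psiVec t x α * psiVec t x β * psiVec t x γ|
          ≤ C * K * (t ^ 2 - ∑ a : Fin 3, (x a) ^ 2) / t ^ 2 := by
  refine ⟨192, by norm_num, fun A K hnull hA t x hx => ?_⟩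
  have ht : 0 < t := by linarith [Real.sqrt_nonneg (∑ a, x a ^ 2)]
  obtain ⟨ω, hω_null, hω, hψω⟩ := exists_null_near_frameVec (show _ ≤ t by linarith) ht
  change |cubicForm A (psiVec t x)| ≤ _
  rw [← sub_zero (cubicForm A _), ← hnull ω hω_null, psiVec_eq_frameVec,
    ← Real.sq_sqrt (sum_nonneg fun a _ => sq_nonneg (x a))]
  set r := √(∑ a, x a ^ 2)
  have hK : 0 ≤ K := (abs_nonneg _).trans (hA 0 0 0)
  calc |cubicForm A (frameVec t x) - cubicForm A ω|
      ≤ 3 * 4 ^ 3 * K * ‖frameVec t x - ω‖ := by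
        simpa using abs_cubicForm_sub_le hA (norm_frameVec_le_one (by linarith)) hω
    _ ≤ 192 * K * ((t - r) / t) := by
        rw [show (3 : ℝ) * 4 ^ 3 = 192 by norm_num]
        gcongr
    _ ≤ 192 * K * (t ^ 2 - r ^ 2) / t ^ 2 := by
        rw [mul_div_assoc]
        exact mul_le_mul_of_nonneg_left
          (sub_div_le_sq_sub_sq_div_sq (Real.sqrt_nonneg _) (by linarith) ht) (by positivity)
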